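/- Let P be a symmetric positive definite n×n real matrix, R a symmetric positive definite m×m real matrix, H an m×n real matrix, and K* = P·Hᵀ·(H·P·Hᵀ + R)⁻¹ the Kalman gain. Then for every real λ < 0 and every n×m real matrix K, |det(λ·I - P_{K*})| ≤ |det(λ·I - P_K)|; in particular, taking λ = -1, the sum Σ_{i=0}^{n} |a_i^K| of the absolute values of the coefficients of the characteristic polynomial of P_K (equivalently, the sum of all elementary symmetric polynomials of the eigenvalues of P_K) is minimized at K = K*: Σ_{i=0}^{n} |a_i^{K*}| ≤ Σ_{i=0}^{n} |a_i^K|. -/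

import Mathlib

open Matrix

/-- The posterior covariance matrix `P_K = (I - K·H)·P·(I - K·H)ᵀ + K·R·Kᵀ`. -/
noncomputable def postCov {n m : ℕ} (P : Matrix (Fin n) (Fin n) ℝ)
    (R : Matrix (Fin m) (Fin m) ℝ) (H : Matrix (Fin m) (Fin n) ℝ)
    (K : Matrix (Fin n) (Fin m) ℝ) : Matrix (Fin n) (Fin n) ℝ :=
  (1 - K * H) * P * (1 - K * H)ᵀ + K * R * Kᵀ

/-- The Kalman gain `K* = P·Hᵀ·(H·P·Hᵀ + R)⁻¹`. -/
noncomputable def kalmanGain {n m : ℕ} (P : Matrix (Fin n) (Fin n) ℝ)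
    (R : Matrix (Fin m) (Fin m) ℝ) (H : Matrix (Fin m) (Fin n) ℝ) :
    Matrix (Fin n) (Fin m) ℝ :=
  P * Hᵀ * (H * P * Hᵀ + R)⁻¹

/-!
Completing the square gives `P_K = P_{K*} + (K - K*) S (K - K*)ᵀ` with `S = H P Hᵀ + R`
positive definite, so `P_{K*} ≤ P_K` in the Loewner order. For `λ < 0` the matrices `P_K - λ`
are positive definite, `|det (λ - P_K)| = det (P_K - λ)`, and the determinant is monotone on
positive definite matrices: if `A = S²` with `S = √A`, then `B = S (1 + C) S` with `C ⪰ 0`, and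
`det (1 + C) ≥ 1`. The roots of the characteristic polynomial of a positive semidefinite
matrix are nonnegative, so its coefficients alternate in sign and the sum of their absolute
values is `|Φ(-1)|`; this reduces the second claim to the first with `λ = -1`.
-/

open Polynomial

namespace Multiset

theorem esymm_nonneg {R : Type*} [CommSemiring R] [PartialOrder R] [IsOrderedRing R]
    {s : Multiset R} (hs : ∀ r ∈ s, 0 ≤ r) (k : ℕ) : 0 ≤ s.esymm k :=
  sum_nonneg fun _ ht => by
    obtain ⟨t, hts, rfl⟩ := mem_map.mp ht
    exact prod_nonneg fun r hr => hs r (mem_of_le (mem_powersetCard.mp hts).1 hr)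

theorem sum_abs_coeff_prod_X_sub_C {s : Multiset ℝ} (hs : ∀ r ∈ s, 0 ≤ r) :
    ∑ k ∈ Finset.range (card s + 1), |(s.map fun r => X - C r).prod.coeff k| =
      |(s.map fun r => X - C r).prod.eval (-1)| := by
  set p := (s.map fun r => X - C r).prod
  have hcoeff : ∀ k ∈ Finset.range (card s + 1),
      p.coeff k * (-1) ^ k = (-1) ^ card s * |p.coeff k| := by
    intro k hk
    have hk : k ≤ card s := Nat.lt_succ_iff.mp (Finset.mem_range.mp hk)
    rw [prod_X_sub_C_coeff s hk, abs_mul, abs_pow, abs_neg, abs_one, one_pow, one_mul,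
      abs_of_nonneg (esymm_nonneg hs _), mul_right_comm, ← pow_add, Nat.sub_add_cancel hk]
  rw [eval_eq_sum_range, natDegree_multiset_prod_X_sub_C_eq_card, Finset.sum_congr rfl hcoeff,
    ← Finset.mul_sum, abs_mul, abs_pow, abs_neg, abs_one, one_pow, one_mul,
    abs_of_nonneg (Finset.sum_nonneg fun _ _ => abs_nonneg _)]

end Multiset

namespace Matrix

variable {ι : Type*}

theorem PosSemidef.posDef_sub_smul_one [DecidableEq ι] {M : Matrix ι ι ℝ} (hM : M.PosSemidef)
    {t : ℝ} (ht : t < 0) : (M - t • 1).PosDef := by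
  rw [sub_eq_add_neg, ← neg_smul]
  exact PosDef.posSemidef_add hM (PosDef.one.smul (neg_pos.mpr ht))

variable [Fintype ι]

theorem PosSemidef.mul_mul_transpose_same {κ : Type*} [Fintype κ] {A : Matrix ι ι ℝ}
    (hA : A.PosSemidef) (B : Matrix κ ι ℝ) : (B * A * Bᵀ).PosSemidef := by
  simpa only [conjTranspose_eq_transpose_of_trivial] using hA.mul_mul_conjTranspose_same B

variable [DecidableEq ι]

theorem PosSemidef.sum_abs_coeff_charpoly {M : Matrix ι ι ℝ} (hM : M.PosSemidef) :
    ∑ k ∈ Finset.range (Fintype.card ι + 1), |M.charpoly.coeff k| =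
      |((-1 : ℝ) • (1 : Matrix ι ι ℝ) - M).det| := by
  set s := Finset.univ.val.map hM.isHermitian.eigenvalues
  have hs : ∀ r ∈ s, 0 ≤ r := by
    simpa [s] using hM.eigenvalues_nonneg
  have hcharpoly : M.charpoly = (s.map fun r => X - C r).prod := by
    rw [hM.isHermitian.charpoly_eq, Finset.prod_eq_multiset_prod, Multiset.map_map]
    rfl
  have h := Multiset.sum_abs_coeff_prod_X_sub_C hs
  rwa [← hcharpoly, eval_charpoly, scalar_apply, ← smul_one_eq_diagonal, Multiset.card_map,
    Finset.card_val, Finset.card_univ] at h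

theorem IsHermitian.det_one_add {M : Matrix ι ι ℝ} (hM : M.IsHermitian) :
    (1 + M).det = ∏ i, (1 + hM.eigenvalues i) := by
  have h := congrArg (eval (-1)) hM.charpoly_eq
  rw [eval_charpoly, eval_prod] at h
  have hneg : scalar ι (-1 : ℝ) - M = -(1 + M) := by
    rw [scalar_apply, ← smul_one_eq_diagonal, neg_one_smul, neg_add']
  simp only [hneg, det_neg, eval_sub, eval_X, eval_C, RCLike.ofReal_real_eq_id, id,
    ← neg_add', Finset.prod_neg] at h
  exact mul_left_cancel₀ (pow_ne_zero _ (by norm_num)) h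

theorem PosSemidef.one_le_det_one_add {M : Matrix ι ι ℝ} (hM : M.PosSemidef) :
    1 ≤ (1 + M).det := by
  rw [hM.isHermitian.det_one_add]
  exact Finset.one_le_prod fun i _ => le_add_of_nonneg_right (hM.eigenvalues_nonneg i)

open scoped MatrixOrder

theorem PosDef.det_le_det {A B : Matrix ι ι ℝ} (hA : A.PosDef) (hAB : A ≤ B) :
    A.det ≤ B.det := by
  set S := CFC.sqrt A
  have hSS : S * S = A := CFC.sqrt_mul_sqrt_self A hA.posSemidef.nonneg
  have hS : IsUnit S.det := (isUnit_iff_isUnit_det S).mp hA.isStrictlyPositive.sqrt.isUnit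
  have hSinv : S⁻¹ᴴ = S⁻¹ := (CFC.sqrt_nonneg A).posSemidef.isHermitian.inv.eq
  set C := S⁻¹ * (B - A) * S⁻¹
  have hC : C.PosSemidef := by
    simpa only [hSinv] using (le_iff.mp hAB).mul_mul_conjTranspose_same S⁻¹
  have hB : B = S * (1 + C) * S := by
    simp only [C, mul_add, add_mul, mul_one, hSS, ← mul_assoc, mul_nonsing_inv _ hS, one_mul]
    rw [mul_assoc, nonsing_inv_mul _ hS, mul_one, add_sub_cancel]
  calc A.det = A.det * 1 := (mul_one _).symm
    _ ≤ A.det * (1 + C).det := mul_le_mul_of_nonneg_left hC.one_le_det_one_add hA.det_pos.le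
    _ = B.det := by rw [hB, ← hSS]; simp only [det_mul]; ring

theorem PosSemidef.abs_det_smul_one_sub {M : Matrix ι ι ℝ} (hM : M.PosSemidef) {t : ℝ}
    (ht : t < 0) : |(t • 1 - M).det| = (M - t • 1).det := by
  rw [← neg_sub, det_neg, abs_mul, abs_pow, abs_neg, abs_one, one_pow, one_mul,
    abs_of_pos (hM.posDef_sub_smul_one ht).det_pos]

theorem PosSemidef.abs_det_smul_one_sub_le {A B : Matrix ι ι ℝ} (hA : A.PosSemidef)
    (hAB : A ≤ B) {t : ℝ} (ht : t < 0) : |(t • 1 - A).det| ≤ |(t • 1 - B).det| := by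
  rw [hA.abs_det_smul_one_sub ht, (hA.nonneg.trans hAB).posSemidef.abs_det_smul_one_sub ht]
  exact (hA.posDef_sub_smul_one ht).det_le_det (sub_le_sub_right hAB _)

end Matrix

section KalmanGain

variable {n m : ℕ} {P : Matrix (Fin n) (Fin n) ℝ} {R : Matrix (Fin m) (Fin m) ℝ}
  {H : Matrix (Fin m) (Fin n) ℝ}

theorem postCov_posSemidef (hP : P.PosSemidef) (hR : R.PosSemidef)
    (K : Matrix (Fin n) (Fin m) ℝ) : (postCov P R H K).PosSemidef :=
  (hP.mul_mul_transpose_same _).add (hR.mul_mul_transpose_same K)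

theorem postCov_eq_postCov_kalmanGain_add (hP : P.IsSymm) (hR : R.IsSymm)
    (hS : IsUnit (H * P * Hᵀ + R).det) (K : Matrix (Fin n) (Fin m) ℝ) :
    postCov P R H K = postCov P R H (kalmanGain P R H) +
      (K - kalmanGain P R H) * (H * P * Hᵀ + R) * (K - kalmanGain P R H)ᵀ := by
  set S := H * P * Hᵀ + R
  set G := kalmanGain P R H
  have hHP : (H * P)ᵀ = P * Hᵀ := by rw [transpose_mul, hP.eq]
  have hGS : G * S = P * Hᵀ := by
    rw [show G = P * Hᵀ * S⁻¹ from rfl, Matrix.mul_assoc, nonsing_inv_mul _ hS, Matrix.mul_one]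
  have hSG : S * Gᵀ = H * P := by
    have hS_symm : Sᵀ = S := by
      simp only [S, transpose_add, transpose_mul, transpose_transpose, hP.eq, hR.eq,
        Matrix.mul_assoc]
    rw [← hS_symm, ← transpose_mul, hGS, ← hHP, transpose_transpose]
  have expand : ∀ L : Matrix (Fin n) (Fin m) ℝ,
      postCov P R H L = P - L * (H * P) - P * Hᵀ * Lᵀ + L * S * Lᵀ := by
    intro L
    rw [postCov, transpose_sub, transpose_one, transpose_mul]
    simp only [S, Matrix.sub_mul, Matrix.mul_sub, Matrix.add_mul, Matrix.mul_add, Matrix.one_mul,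
      Matrix.mul_one, Matrix.mul_assoc]
    abel
  rw [expand K, expand G, ← hSG, ← hGS, transpose_sub]
  simp only [Matrix.sub_mul, Matrix.mul_sub, Matrix.mul_assoc]
  abel

open scoped MatrixOrder in
theorem postCov_kalmanGain_le (hP : P.PosSemidef) (hR : R.PosDef) (K : Matrix (Fin n) (Fin m) ℝ) :
    postCov P R H (kalmanGain P R H) ≤ postCov P R H K := by
  have hS : (H * P * Hᵀ + R).PosDef :=
    PosDef.posSemidef_add (hP.mul_mul_transpose_same H) hR
  rw [le_iff, postCov_eq_postCov_kalmanGain_add (isHermitian_iff_isSymm.mp hP.isHermitian)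
    (isHermitian_iff_isSymm.mp hR.isHermitian) hS.det_pos.ne'.isUnit K, add_sub_cancel_left]
  exact hS.posSemidef.mul_mul_transpose_same _

end KalmanGain

theorem abs_det_neg_and_sum_abs_coeff_postCov_kalmanGain_le {n m : ℕ}
    (P : Matrix (Fin n) (Fin n) ℝ)
    (R : Matrix (Fin m) (Fin m) ℝ) (H : Matrix (Fin m) (Fin n) ℝ)
    (hP : P.PosDef) (hR : R.PosDef) :
    (∀ lam : ℝ, lam < 0 → ∀ K : Matrix (Fin n) (Fin m) ℝ,
      |(lam • (1 : Matrix (Fin n) (Fin n) ℝ) - postCov P R H (kalmanGain P R H)).det| ≤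
        |(lam • (1 : Matrix (Fin n) (Fin n) ℝ) - postCov P R H K).det|) ∧
    (∀ K : Matrix (Fin n) (Fin m) ℝ,
      ∑ i ∈ Finset.range (n + 1), |(postCov P R H (kalmanGain P R H)).charpoly.coeff i| ≤
        ∑ i ∈ Finset.range (n + 1), |(postCov P R H K).charpoly.coeff i|) := by
  have hPK : ∀ K, (postCov P R H K).PosSemidef :=
    postCov_posSemidef hP.posSemidef hR.posSemidef
  have hsum : ∀ K, ∑ i ∈ Finset.range (n + 1), |(postCov P R H K).charpoly.coeff i| =
      |((-1 : ℝ) • (1 : Matrix (Fin n) (Fin n) ℝ) - postCov P R H K).det| := fun K => by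
    rw [← (hPK K).sum_abs_coeff_charpoly, Fintype.card_fin]
  refine ⟨fun lam hlam K =>
    (hPK _).abs_det_smul_one_sub_le (postCov_kalmanGain_le hP.posSemidef hR K) hlam, fun K => ?_⟩
  rw [hsum, hsum]
  exact (hPK _).abs_det_smul_one_sub_le (postCov_kalmanGain_le hP.posSemidef hR K) neg_one_lt_zero
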